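/- There exists a constant C > 0 such that for all real x ≥ 1, the L²(0,1)-norm of B_x satisfies ‖B_x‖₂ ≤ C/√x, where B_x(t) = (1/x)·Σ_{k ≤ x} β(kt). -/

import Mathlib

/-!
Franel's identity `∫₀¹ β(kt) β(lt) dt = gcd(k,l)² / (12kl)` turns `‖B_x‖₂²` into
`(12x²)⁻¹ ∑_{k,l ≤ x} gcd(k,l)² / (kl)`. For coprime `a, b` the identity follows from the
substitution `u = at` and the distribution relation `∑_{j<a} β((t+j)/a) = β(t)`, because
`j ↦ bj` permutes the residues modulo `a`; the general case reduces to this one by 1-periodicity.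
Keeping only the term `d = gcd(k,l)` of `∑_{d ∣ k, d ∣ l} d²` gives
`∑_{k,l ≤ N} gcd(k,l)² / (kl) ≤ ∑_{d ≤ N} H_{N/d}²`, and `H_M ≤ 4 M^{1/4}` together with
`∑_{d ≤ N} d^{-1/2} ≤ 2√N` bounds this by `32N`. Hence `‖B_x‖₂² ≤ 3/x`.
-/

noncomputable def beta (t : ℝ) : ℝ := t - ⌊t⌋ - 1/2

noncomputable def B (x : ℝ) (t : ℝ) : ℝ :=
  (1/x) * ∑ k ∈ Finset.Icc 1 ⌊x⌋₊, beta (k * t)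

open MeasureTheory Finset Function

theorem Function.Periodic.sum_range_comp_mul {M : Type*} [AddCommMonoid M] {f : ℕ → M}
    {a b : ℕ} (hf : Periodic f a) (hab : Nat.Coprime b a) :
    ∑ j ∈ range a, f (b * j) = ∑ j ∈ range a, f j := by
  rcases Nat.eq_zero_or_pos a with rfl | ha
  · simp
  have hmaps : Set.MapsTo (fun j => b * j % a) (range a) (range a) :=
    fun j _ => mem_range.2 (Nat.mod_lt _ ha)
  have hinj : Set.InjOn (fun j => b * j % a) (range a) := fun i hi j hj hij => by
    have := Nat.ModEq.cancel_left_of_coprime (Nat.coprime_comm.1 hab) hij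
    rwa [Nat.ModEq, Nat.mod_eq_of_lt (mem_range.1 hi), Nat.mod_eq_of_lt (mem_range.1 hj)] at this
  simp_rw [← hf.map_mod_nat (b * _)]
  exact sum_nbij _ hmaps hinj (surjOn_of_injOn_of_card_le _ hmaps hinj le_rfl) fun _ _ => rfl

lemma beta_eq_fract_sub (t : ℝ) : beta t = Int.fract t - 1/2 := rfl

lemma abs_beta_le (t : ℝ) : |beta t| ≤ 1/2 := by
  rw [beta_eq_fract_sub, abs_le]
  constructor <;> linarith [Int.fract_nonneg t, Int.fract_lt_one t]

lemma measurable_beta : Measurable beta :=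
  measurable_fract.sub_const _

lemma beta_periodic : Periodic beta 1 := fun t => by
  simp only [beta_eq_fract_sub, Int.fract_periodic ℝ t]

lemma beta_add_natCast (t : ℝ) (n : ℕ) : beta (t + n) = beta t := by
  simp only [beta_eq_fract_sub, Int.fract_add_natCast]

lemma beta_of_mem_Ico {t : ℝ} (ht : t ∈ Set.Ico 0 1) : beta t = t - 1/2 := by
  rw [beta_eq_fract_sub, Int.fract_eq_self.2 ht]

lemma sum_range_beta_add_div {a : ℕ} (ha : a ≠ 0) (t : ℝ) :
    ∑ j ∈ range a, beta ((t + j) / a) = beta t := by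
  have ha' : (0:ℝ) < a := by positivity
  set S : ℝ → ℝ := fun t => ∑ j ∈ range a, beta ((t + j) / a)
  have hS : Periodic S 1 := fun t => by
    set g : ℕ → ℝ := fun j => beta ((t + j) / a)
    have hg : g a = g 0 := by
      simp only [g, Nat.cast_zero, add_zero]
      rw [add_div, div_self ha'.ne', beta_periodic]
    have := (sum_range_succ' g a).symm.trans (sum_range_succ g a)
    rw [hg, add_left_inj] at this
    refine (sum_congr rfl fun j _ => ?_).trans this
    simp only [g, Nat.cast_succ]
    ring_nf
  have hIco : ∀ s ∈ Set.Ico (0:ℝ) 1, S s = beta s := fun s ⟨hs0, hs1⟩ => by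
    have hj : ∀ j ∈ range a, beta ((s + j) / a) = (s + j) / a - 1/2 := fun j hj => by
      have : (j:ℝ) + 1 ≤ a := by exact_mod_cast mem_range.1 hj
      exact beta_of_mem_Ico ⟨by positivity, by rw [div_lt_one ha']; linarith⟩
    have hgauss : (∑ j ∈ range a, (j:ℝ)) * 2 = a * (a - 1) := by
      have := congrArg (Nat.cast : ℕ → ℝ) (sum_range_id_mul_two a)
      push_cast [Nat.cast_sub (Nat.one_le_iff_ne_zero.2 ha)] at this
      exact this
    simp only [S, sum_congr rfl hj, beta_of_mem_Ico ⟨hs0, hs1⟩, sum_sub_distrib, ← sum_div,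
      sum_add_distrib, sum_const, card_range, nsmul_eq_mul]
    field_simp
    linarith
  calc S t = S (Int.fract t) := by
        rw [← hS.int_mul ⌊t⌋ (Int.fract t), mul_one, Int.fract_add_floor]
    _ = beta (Int.fract t) := hIco _ ⟨Int.fract_nonneg t, Int.fract_lt_one t⟩
    _ = beta t := by rw [beta_eq_fract_sub, beta_eq_fract_sub, Int.fract_fract]

lemma sum_range_beta_add_mul_div {a b : ℕ} (ha : a ≠ 0) (hab : Nat.Coprime b a) (t : ℝ) :
    ∑ j ∈ range a, beta ((t + b * j) / a) = beta t := by
  have hper : Periodic (fun n : ℕ => beta ((t + n) / a)) a := fun n => by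
    dsimp only
    rw [Nat.cast_add, ← add_assoc, add_div _ (a:ℝ), div_self (Nat.cast_ne_zero.2 ha : (a:ℝ) ≠ 0),
      beta_periodic]
  have := hper.sum_range_comp_mul hab
  push_cast at this
  rw [this, sum_range_beta_add_div ha]

lemma intervalIntegrable_beta_comp_mul_beta_comp {f g : ℝ → ℝ} (hf : Measurable f)
    (hg : Measurable g) (c d : ℝ) :
    IntervalIntegrable (fun t => beta (f t) * beta (g t)) volume c d := by
  refine (intervalIntegrable_const (c := (1/4 : ℝ))).mono_fun'
    ((measurable_beta.comp hf).mul (measurable_beta.comp hg)).aestronglyMeasurable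
    (Filter.Eventually.of_forall fun t => ?_)
  dsimp only
  rw [Real.norm_eq_abs, abs_mul]
  nlinarith [abs_beta_le (f t), abs_beta_le (g t), abs_nonneg (beta (f t)), abs_nonneg (beta (g t))]

theorem intervalIntegral.integral_zero_natCast_eq_integral_sum {E : Type*} [NormedAddCommGroup E]
    [NormedSpace ℝ E] {F : ℝ → E} (hF : ∀ c d, IntervalIntegrable F volume c d) (n : ℕ) :
    ∫ u in (0:ℝ)..n, F u = ∫ u in (0:ℝ)..1, ∑ j ∈ range n, F (u + j) := by
  have := intervalIntegral.sum_integral_adjacent_intervals (a := fun j : ℕ => (j:ℝ)) (n := n)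
    (μ := volume) (f := F) fun j _ => hF _ _
  rw [Nat.cast_zero] at this
  rw [intervalIntegral.integral_finsetSum fun j _ => ?_, ← this]
  · refine sum_congr rfl fun j _ => ?_
    rw [intervalIntegral.integral_comp_add_right, zero_add, Nat.cast_succ, add_comm]
  · simpa using (hF j (1 + j)).comp_add_right (j:ℝ)

theorem Function.Periodic.intervalIntegral_comp_natCast_mul {E : Type*} [NormedAddCommGroup E]
    [NormedSpace ℝ E] {H : ℝ → E} (hH : Periodic H 1)
    (hint : ∀ c d, IntervalIntegrable H volume c d) {n : ℕ} (hn : n ≠ 0) :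
    ∫ t in (0:ℝ)..1, H (n * t) = ∫ t in (0:ℝ)..1, H t := by
  have hn' : (n:ℝ) ≠ 0 := Nat.cast_ne_zero.2 hn
  rw [intervalIntegral.integral_comp_mul_left H hn', mul_zero, mul_one,
    intervalIntegral.integral_zero_natCast_eq_integral_sum hint]
  have hshift (j : ℕ) (u : ℝ) : H (u + j) = H u := by simpa using hH.nat_mul j u
  simp_rw [hshift, Finset.sum_const, card_range, ← Nat.cast_smul_eq_nsmul ℝ]
  rw [intervalIntegral.integral_smul, smul_smul, inv_mul_cancel₀ hn', one_smul]

lemma integral_beta_mul_self : ∫ t in (0:ℝ)..1, beta t * beta t = 1/12 := by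
  have h : Set.EqOn (fun t => beta t * beta t) (fun t => (t - 1/2)^2) (Set.uIcc 0 1) := by
    intro t ht
    rw [Set.uIcc_of_le zero_le_one] at ht
    rcases ht.2.lt_or_eq with ht1 | rfl
    · simp only [beta_of_mem_Ico ⟨ht.1, ht1⟩, sq]
    · norm_num [beta]
  rw [intervalIntegral.integral_congr h, intervalIntegral.integral_comp_sub_right (· ^ 2),
    integral_pow]
  norm_num

lemma integral_beta_mul_beta_eq_div {a b : ℕ} (ha : a ≠ 0) (hab : Nat.Coprime b a) :
    ∫ t in (0:ℝ)..1, beta (a * t) * beta (b * t) =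
      (∫ u in (0:ℝ)..1, beta u * beta (b * u)) / a := by
  have ha' : (a:ℝ) ≠ 0 := Nat.cast_ne_zero.2 ha
  set F : ℝ → ℝ := fun u => beta u * beta (b * u / a)
  have hF : ∀ t, beta (a * t) * beta (b * t) = F (a * t) := fun t => by
    simp only [F]; field_simp
  have hFj : ∀ u (j : ℕ), F (u + j) = beta u * beta ((b * u + b * j) / a) := fun u j => by
    simp only [F, mul_add, beta_add_natCast]
  have hFint : ∀ c d, IntervalIntegrable F volume c d :=
    intervalIntegrable_beta_comp_mul_beta_comp measurable_id (by fun_prop)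
  simp_rw [hF]
  rw [intervalIntegral.integral_comp_mul_left F ha', mul_zero, mul_one,
    intervalIntegral.integral_zero_natCast_eq_integral_sum hFint]
  simp_rw [hFj, ← mul_sum, sum_range_beta_add_mul_div ha hab, smul_eq_mul]
  ring

lemma integral_beta_mul_beta_of_coprime {a b : ℕ} (ha : a ≠ 0) (hb : b ≠ 0)
    (hab : Nat.Coprime a b) :
    ∫ t in (0:ℝ)..1, beta (a * t) * beta (b * t) = 1 / (12 * a * b) := by
  have hb1 := integral_beta_mul_beta_eq_div hb (Nat.coprime_one_left b)
  simp only [Nat.cast_one, one_mul, integral_beta_mul_self] at hb1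
  rw [integral_beta_mul_beta_eq_div ha hab.symm,
    intervalIntegral.integral_congr fun u _ => mul_comm (beta u) _, hb1]
  field_simp

/-- Franel's identity. -/
theorem integral_beta_mul_beta {k l : ℕ} (hk : k ≠ 0) (hl : l ≠ 0) :
    ∫ t in (0:ℝ)..1, beta (k * t) * beta (l * t) = (Nat.gcd k l : ℝ) ^ 2 / (12 * k * l) := by
  obtain ⟨g, a, b, hg, hab, rfl, rfl⟩ :=
    Nat.exists_coprime' (Nat.gcd_pos_of_pos_left l (Nat.pos_of_ne_zero hk))
  have ha : a ≠ 0 := left_ne_zero_of_mul hk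
  have hb : b ≠ 0 := left_ne_zero_of_mul hl
  set H : ℝ → ℝ := fun u => beta (a * u) * beta (b * u)
  have hH : Periodic H 1 := fun u => by
    simp only [H, mul_add, mul_one, beta_add_natCast]
  have hHint : ∀ c d, IntervalIntegrable H volume c d :=
    intervalIntegrable_beta_comp_mul_beta_comp (by fun_prop) (by fun_prop)
  have hrescale : ∀ t, beta ((a * g : ℕ) * t) * beta ((b * g : ℕ) * t) = H (g * t) := fun t => by
    simp only [H]; push_cast; ring_nf
  simp_rw [hrescale]
  rw [hH.intervalIntegral_comp_natCast_mul hHint hg.ne']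
  simp only [H]
  rw [integral_beta_mul_beta_of_coprime ha hb hab, Nat.gcd_mul_right, hab.gcd_eq_one, one_mul]
  push_cast
  field_simp

lemma mul_rpow_sub_one_le_rpow_sub_rpow {p x : ℝ} (hp0 : 0 ≤ p) (hp1 : p ≤ 1) (hx : 1 ≤ x) :
    p * x ^ (p - 1) ≤ x ^ p - (x - 1) ^ p := by
  have hx0 : 0 < x := by linarith
  have hs : -1 ≤ -x⁻¹ := neg_le_neg (inv_le_one_of_one_le₀ hx)
  have hbern := rpow_one_add_le_one_add_mul_self hs hp0 hp1
  have hsplit : (x - 1) ^ p = x ^ p * (1 + -x⁻¹) ^ p := by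
    rw [← Real.mul_rpow hx0.le (by linarith)]
    field_simp
    ring_nf
  rw [hsplit, Real.rpow_sub_one hx0.ne']
  have := mul_le_mul_of_nonneg_left hbern (Real.rpow_nonneg hx0.le p)
  have e : x ^ p * (1 + p * -x⁻¹) = x ^ p - p * (x ^ p / x) := by ring
  linarith

lemma sum_Icc_rpow_sub_one_le {p : ℝ} (hp0 : 0 < p) (hp1 : p ≤ 1) (M : ℕ) :
    ∑ i ∈ Icc 1 M, (i : ℝ) ^ (p - 1) ≤ M ^ p / p := by
  induction M with
  | zero => simp [Real.zero_rpow hp0.ne']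
  | succ M ih =>
    rw [sum_Icc_succ_top (by omega), le_div_iff₀ hp0, add_mul]
    have := mul_rpow_sub_one_le_rpow_sub_rpow hp0.le hp1 (x := (M + 1 : ℕ)) (by simp)
    rw [le_div_iff₀ hp0] at ih
    push_cast at this ⊢
    simp only [add_sub_cancel_right] at this
    linarith

lemma sum_Icc_inv_le (M : ℕ) : ∑ i ∈ Icc 1 M, (i : ℝ)⁻¹ ≤ 4 * (M : ℝ) ^ (1 / 4 : ℝ) := by
  calc ∑ i ∈ Icc 1 M, (i : ℝ)⁻¹ ≤ ∑ i ∈ Icc 1 M, (i : ℝ) ^ (1 / 4 - 1 : ℝ) :=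
        sum_le_sum fun i hi => by
          rw [← Real.rpow_neg_one]
          exact Real.rpow_le_rpow_of_exponent_le (by exact_mod_cast (mem_Icc.1 hi).1) (by norm_num)
    _ ≤ (M : ℝ) ^ (1 / 4 : ℝ) / (1 / 4) := sum_Icc_rpow_sub_one_le (by norm_num) (by norm_num) M
    _ = 4 * (M : ℝ) ^ (1 / 4 : ℝ) := by ring

lemma sq_sum_Icc_inv_le (M : ℕ) :
    (∑ i ∈ Icc 1 M, (i : ℝ)⁻¹) ^ 2 ≤ 16 * (M : ℝ) ^ (1 / 2 : ℝ) := by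
  calc (∑ i ∈ Icc 1 M, (i : ℝ)⁻¹) ^ 2 ≤ (4 * (M : ℝ) ^ (1 / 4 : ℝ)) ^ 2 :=
        pow_le_pow_left₀ (sum_nonneg fun i _ => by positivity) (sum_Icc_inv_le M) 2
    _ = 16 * (M : ℝ) ^ (1 / 2 : ℝ) := by
        rw [mul_pow, ← Real.rpow_natCast (_ ^ _), ← Real.rpow_mul (by positivity)]
        norm_num

lemma sum_Icc_sqrt_div_le (N : ℕ) : ∑ d ∈ Icc 1 N, ((N : ℝ) / d) ^ (1 / 2 : ℝ) ≤ 2 * N := by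
  have hterm : ∀ d ∈ Icc 1 N,
      ((N : ℝ) / d) ^ (1 / 2 : ℝ) = (N : ℝ) ^ (1 / 2 : ℝ) * (d : ℝ) ^ (1 / 2 - 1 : ℝ) := by
    intro d hd
    have hd0 : (d : ℝ) ≠ 0 := by exact_mod_cast (Nat.one_le_iff_ne_zero.1 (mem_Icc.1 hd).1)
    rw [Real.div_rpow (by positivity) (by positivity), show (1 / 2 - 1 : ℝ) = -(1 / 2) by norm_num,
      Real.rpow_neg (by positivity), div_eq_mul_inv]
  rw [sum_congr rfl hterm, ← mul_sum]
  calc (N : ℝ) ^ (1 / 2 : ℝ) * ∑ d ∈ Icc 1 N, (d : ℝ) ^ (1 / 2 - 1 : ℝ)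
      ≤ (N : ℝ) ^ (1 / 2 : ℝ) * ((N : ℝ) ^ (1 / 2 : ℝ) / (1 / 2)) := by
        gcongr; exact sum_Icc_rpow_sub_one_le (by norm_num) (by norm_num) N
    _ = 2 * N := by
        rw [mul_div_assoc', ← Real.rpow_add' (by positivity) (by norm_num)]
        norm_num
        ring

lemma sum_Icc_filter_dvd_div (N : ℕ) {d : ℕ} (hd : d ≠ 0) :
    ∑ k ∈ Icc 1 N with d ∣ k, (d : ℝ) / k = ∑ a ∈ Icc 1 (N / d), (a : ℝ)⁻¹ := by
  have hmap : {k ∈ Icc 1 N | d ∣ k} = (Icc 1 (N / d)).map ⟨(d * ·), mul_right_injective₀ hd⟩ := by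
    ext k
    simp only [mem_filter, mem_Icc, mem_map, Function.Embedding.coeFn_mk]
    rw [← Nat.pos_iff_ne_zero] at hd
    constructor
    · rintro ⟨⟨hk1, hkN⟩, a, rfl⟩
      exact ⟨a, ⟨Nat.pos_of_mul_pos_left hk1, (Nat.le_div_iff_mul_le hd).2 (by rwa [mul_comm])⟩,
        rfl⟩
    · rintro ⟨a, ⟨ha1, haN⟩, rfl⟩
      exact ⟨⟨Nat.mul_pos hd ha1, by rw [mul_comm]; exact (Nat.le_div_iff_mul_le hd).1 haN⟩,
        dvd_mul_right d a⟩
  rw [hmap, sum_map]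
  refine sum_congr rfl fun a _ => ?_
  have : (d : ℝ) ≠ 0 := by exact_mod_cast hd
  simp only [Function.Embedding.coeFn_mk, Nat.cast_mul]
  field_simp

theorem sum_sq_gcd_div_mul_le (N : ℕ) :
    ∑ k ∈ Icc 1 N, ∑ l ∈ Icc 1 N, (Nat.gcd k l : ℝ) ^ 2 / (k * l) ≤ 32 * N := by
  set w : ℕ → ℕ → ℝ := fun d k => if d ∣ k then (d : ℝ) / k else 0
  have hgcd : ∀ k ∈ Icc 1 N, ∀ l ∈ Icc 1 N,
      (Nat.gcd k l : ℝ) ^ 2 / (k * l) ≤ ∑ d ∈ Icc 1 N, w d k * w d l := by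
    intro k hk l hl
    have hk1 := (mem_Icc.1 hk).1
    have hmem : Nat.gcd k l ∈ Icc 1 N :=
      mem_Icc.2 ⟨Nat.gcd_pos_of_pos_left l hk1, (Nat.gcd_le_left l hk1).trans (mem_Icc.1 hk).2⟩
    refine le_of_eq_of_le ?_ (single_le_sum (fun d _ => ?_) hmem)
    · simp only [w, Nat.gcd_dvd_left, Nat.gcd_dvd_right, if_true]
      ring
    · simp only [w]; split_ifs <;> positivity
  have hw : ∀ d ∈ Icc 1 N, ∑ k ∈ Icc 1 N, w d k = ∑ a ∈ Icc 1 (N / d), (a : ℝ)⁻¹ := fun d hd => by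
    rw [← sum_Icc_filter_dvd_div N (Nat.one_le_iff_ne_zero.1 (mem_Icc.1 hd).1), sum_filter]
  calc ∑ k ∈ Icc 1 N, ∑ l ∈ Icc 1 N, (Nat.gcd k l : ℝ) ^ 2 / (k * l)
      ≤ ∑ k ∈ Icc 1 N, ∑ l ∈ Icc 1 N, ∑ d ∈ Icc 1 N, w d k * w d l :=
        sum_le_sum fun k hk => sum_le_sum fun l hl => hgcd k hk l hl
    _ = ∑ d ∈ Icc 1 N, (∑ k ∈ Icc 1 N, w d k) ^ 2 := by
        simp_rw [sq, sum_mul_sum]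
        exact (sum_congr rfl fun k _ => sum_comm).trans sum_comm
    _ = ∑ d ∈ Icc 1 N, (∑ a ∈ Icc 1 (N / d), (a : ℝ)⁻¹) ^ 2 :=
        sum_congr rfl fun d hd => by rw [hw d hd]
    _ ≤ ∑ d ∈ Icc 1 N, 16 * ((N : ℝ) / d) ^ (1 / 2 : ℝ) := sum_le_sum fun d _ => by
        refine (sq_sum_Icc_inv_le (N / d)).trans ?_
        gcongr
        exact Nat.cast_div_le
    _ ≤ 32 * N := by
        rw [← mul_sum]; linarith [sum_Icc_sqrt_div_le N]

lemma integral_sq_B (x : ℝ) :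
    ∫ t in (0:ℝ)..1, B x t ^ 2 =
      (∑ k ∈ Icc 1 ⌊x⌋₊, ∑ l ∈ Icc 1 ⌊x⌋₊, (Nat.gcd k l : ℝ) ^ 2 / (k * l)) / (12 * x ^ 2) := by
  set N := ⌊x⌋₊
  have hint (k l : ℕ) : IntervalIntegrable (fun t => beta (k * t) * beta (l * t)) volume 0 1 :=
    intervalIntegrable_beta_comp_mul_beta_comp (by fun_prop) (by fun_prop) 0 1
  have hrow : ∀ k ∈ Icc 1 N, ∫ t in (0:ℝ)..1, ∑ l ∈ Icc 1 N, beta (k * t) * beta (l * t) =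
      ∑ l ∈ Icc 1 N, (Nat.gcd k l : ℝ) ^ 2 / (12 * k * l) := fun k hk => by
    rw [intervalIntegral.integral_finsetSum fun l _ => hint k l]
    exact sum_congr rfl fun l hl => integral_beta_mul_beta
      (Nat.one_le_iff_ne_zero.1 (mem_Icc.1 hk).1) (Nat.one_le_iff_ne_zero.1 (mem_Icc.1 hl).1)
  have hrow_int (k : ℕ) :
      IntervalIntegrable (fun t => ∑ l ∈ Icc 1 N, beta (k * t) * beta (l * t)) volume 0 1 := by
    simpa only [Finset.sum_fn] using IntervalIntegrable.sum (Icc 1 N) fun l _ => hint k l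
  simp_rw [B, mul_pow, sq (∑ k ∈ _, _), sum_mul_sum]
  rw [intervalIntegral.integral_const_mul,
    intervalIntegral.integral_finsetSum fun k _ => hrow_int k, sum_congr rfl hrow, mul_sum, sum_div]
  refine sum_congr rfl fun k _ => ?_
  rw [mul_sum, sum_div]
  refine sum_congr rfl fun l _ => ?_
  ring

theorem stmt_2 :
    ∃ C : ℝ, 0 < C ∧ ∀ x : ℝ, 1 ≤ x →
      (∫ t in (0:ℝ)..1, (B x t)^2) ^ ((1:ℝ)/2) ≤ C / Real.sqrt x := by
  refine ⟨Real.sqrt 3, by positivity, fun x hx => ?_⟩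
  have hx0 : 0 < x := by linarith
  have hbound : ∫ t in (0:ℝ)..1, B x t ^ 2 ≤ 3 / x := by
    rw [integral_sq_B, div_le_div_iff₀ (by positivity) hx0]
    nlinarith [sum_sq_gcd_div_mul_le ⌊x⌋₊, Nat.floor_le hx0.le]
  calc (∫ t in (0:ℝ)..1, B x t ^ 2) ^ ((1:ℝ)/2) ≤ (3 / x) ^ ((1:ℝ)/2) :=
        Real.rpow_le_rpow (intervalIntegral.integral_nonneg zero_le_one fun t _ => sq_nonneg _)
          hbound (by norm_num)
    _ = Real.sqrt 3 / Real.sqrt x := by rw [← Real.sqrt_eq_rpow, Real.sqrt_div' _ hx0.le]
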